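/- (Complementarity cross terms) If (g, m) and (ḡ, m̄) are two solutions of the Skorokhod problem with the same driving function f and matrix R, and u = m - m̄, then for j = 1, 2 the signed measure (Ru)ⱼ duⱼ is non-positive, i.e., for every Borel set B ⊆ [0,∞), ∫_B (Ru(t))ⱼ d(uⱼ)(t) ≤ 0. -/

import Mathlib

open Set Matrix MeasureTheory

theorem MeasureTheory.ae_nonpos_of_le_of_lintegral_ofReal_eq_zero {α : Type*} [MeasurableSpace α]
    {μ : Measure α} {f g : α → ℝ} (hf : AEMeasurable f μ) (hfg : ∀ᵐ x ∂μ, f x ≤ g x)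
    (hg : ∫⁻ x, ENNReal.ofReal (g x) ∂μ = 0) : ∀ᵐ x ∂μ, f x ≤ 0 := by
  have hf0 : ∫⁻ x, ENNReal.ofReal (f x) ∂μ = 0 :=
    nonpos_iff_eq_zero.mp <|
      hg ▸ lintegral_mono_ae (hfg.mono fun x hx => ENNReal.ofReal_le_ofReal hx)
  filter_upwards [(lintegral_eq_zero_iff' hf.ennreal_ofReal).mp hf0] with x hx
  exact ENNReal.ofReal_eq_zero.mp hx

theorem Matrix.mulVec_sub_eq_of_eq_add {l n R : Type*} [Fintype n] [Ring R]
    {A : Matrix l n R} {x y : n → R} {f g h : l → R} (hg : g = f + A *ᵥ x) (hh : h = f + A *ᵥ y) :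
    A *ᵥ (x - y) = g - h := by
  rw [mulVec_sub, hg, hh, add_sub_add_left_eq_sub]

theorem StieltjesFunction.measurable_mulVec_sub {l n : Type*} [Fintype n] {A : Matrix l n ℝ}
    (F G : n → StieltjesFunction ℝ) (i : l) :
    Measurable fun t => (A *ᵥ fun k => F k t - G k t) i := by
  have hF : ∀ k, Measurable (F k) := fun k => (F k).mono.measurable
  have hG : ∀ k, Measurable (G k) := fun k => (G k).mono.measurable
  simp only [mulVec, dotProduct]
  fun_prop

theorem complementarity_cross_terms_nonpos
    (R : Matrix (Fin 2) (Fin 2) ℝ)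
    (f g gbar : ℝ → Fin 2 → ℝ)
    (m mbar : Fin 2 → StieltjesFunction ℝ)
    (hgpos : ∀ t ∈ Set.Ici (0:ℝ), ∀ j, 0 ≤ g t j)
    (hgbarpos : ∀ t ∈ Set.Ici (0:ℝ), ∀ j, 0 ≤ gbar t j)
    (heq : ∀ t ∈ Set.Ici (0:ℝ), g t = f t + R.mulVec (fun j => m j t))
    (heqbar : ∀ t ∈ Set.Ici (0:ℝ), gbar t = f t + R.mulVec (fun j => mbar j t))
    (hcompl : ∀ j, ∫⁻ t in Set.Ici (0:ℝ), ENNReal.ofReal (g t j) ∂(m j).measure = 0)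
    (hcomplbar : ∀ j,
      ∫⁻ t in Set.Ici (0:ℝ), ENNReal.ofReal (gbar t j) ∂(mbar j).measure = 0) :
    ∀ j : Fin 2, ∀ B : Set ℝ, MeasurableSet B → B ⊆ Set.Ici 0 →
      (∫ t in B, R.mulVec (fun i => m i t - mbar i t) j ∂(m j).measure)
        - (∫ t in B, R.mulVec (fun i => m i t - mbar i t) j ∂(mbar j).measure) ≤ 0 := by
  intro j B hB hBsub
  set Ru := fun t => R.mulVec (fun i => m i t - mbar i t) j
  have hRu : ∀ t ∈ Ici (0:ℝ), Ru t = g t j - gbar t j := fun t ht =>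
    congrFun (mulVec_sub_eq_of_eq_add (heq t ht) (heqbar t ht)) j
  have hmeas : Measurable Ru := StieltjesFunction.measurable_mulVec_sub m mbar j
  -- `(Ru)ⱼ = gⱼ - ḡⱼ` lies between `-ḡⱼ` and `gⱼ`, which vanish a.e. for `dm̄ⱼ` and `dmⱼ`.
  have hm : ∀ᵐ t ∂(m j).measure.restrict B, Ru t ≤ 0 :=
    ae_restrict_of_ae_restrict_of_subset hBsub <|
      ae_nonpos_of_le_of_lintegral_ofReal_eq_zero hmeas.aemeasurable
        (ae_restrict_of_forall_mem measurableSet_Ici fun t ht => by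
          linarith [hRu t ht, hgbarpos t ht j]) (hcompl j)
  have hmbar : ∀ᵐ t ∂(mbar j).measure.restrict B, -Ru t ≤ 0 :=
    ae_restrict_of_ae_restrict_of_subset hBsub <|
      ae_nonpos_of_le_of_lintegral_ofReal_eq_zero hmeas.neg.aemeasurable
        (ae_restrict_of_forall_mem measurableSet_Ici fun t ht => by
          linarith [hRu t ht, hgpos t ht j]) (hcomplbar j)
  have h₁ := integral_nonpos_of_ae hm
  have h₂ := integral_nonneg_of_ae (hmbar.mono fun t ht => neg_nonpos.mp ht)
  linarith
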